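/- Let N ≥ 2 be an integer, let B be the (N−1)×(N−1) constant-kernel stiffness matrix with entries B_{i,j} = 2N/3 − 1 if i = j, B_{i,j} = N/6 − 1 if |i−j| = 1, and B_{i,j} = −1 if |i−j| ≥ 2, and let L_{N−1} = tridiag(−1, 2, −1) be the (N−1)×(N−1) discrete Laplacian. Then H := B − (N/12)·L_{N−1} is positive semidefinite. Moreover, H is singular (det H = 0) when N is even, and H is positive definite when N is odd. -/

import Mathlib

open Matrix

/-- The `(N−1)×(N−1)` constant-kernel stiffness matrix: `2N/3 − 1` on the diagonal,
`N/6 − 1` on the first sub/super-diagonals, and `−1` elsewhere. -/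
noncomputable def constB (N : ℕ) : Matrix (Fin (N - 1)) (Fin (N - 1)) ℝ :=
  Matrix.of fun i j =>
    if (i : ℕ) = (j : ℕ) then 2 * (N : ℝ) / 3 - 1
    else if (i : ℕ) + 1 = (j : ℕ) ∨ (j : ℕ) + 1 = (i : ℕ) then (N : ℝ) / 6 - 1
    else -1

/-- The `n × n` one-dimensional discrete Laplacian `tridiag(−1, 2, −1)`. -/
def lap (n : ℕ) : Matrix (Fin n) (Fin n) ℝ :=
  Matrix.of fun i j =>
    if (i : ℕ) = (j : ℕ) then 2
    else if (i : ℕ) + 1 = (j : ℕ) ∨ (j : ℕ) + 1 = (i : ℕ) then -1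
    else 0

variable {N : ℕ}

noncomputable def Tmat (N : ℕ) : Matrix (Fin N) (Fin (N-1)) ℝ :=
  Matrix.of fun k j => (if (k:ℕ) = (j:ℕ) then 1 else 0) + (if (k:ℕ) = (j:ℕ)+1 then 1 else 0)

noncomputable def Mmat (N : ℕ) : Matrix (Fin N) (Fin N) ℝ :=
  Matrix.of fun k l => (if k = l then (N:ℝ) else 0) - 1

lemma sum_ind (m : ℕ) (hm : m < N) (c : Fin N → ℝ) :
    (∑ k : Fin N, if (k:ℕ) = m then c k else 0) = c ⟨m, hm⟩ := by
  have : ∀ k : Fin N, ((k:ℕ) = m) = (k = ⟨m, hm⟩) := fun k => by simp [Fin.ext_iff]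
  simp_rw [this]
  simp

lemma sumT (j : Fin (N-1)) : (∑ k : Fin N, Tmat N k j) = 2 := by
  have hj : (j:ℕ) < N := lt_of_lt_of_le j.2 (Nat.sub_le N 1)
  have hj1 : (j:ℕ)+1 < N := by have := j.2; omega
  simp only [Tmat, Matrix.of_apply, Finset.sum_add_distrib]
  rw [sum_ind (j:ℕ) hj (fun _ => 1), sum_ind ((j:ℕ)+1) hj1 (fun _ => 1)]
  norm_num

lemma sumTT (i j : Fin (N-1)) :
    (∑ k : Fin N, Tmat N k i * Tmat N k j) =
      if (i:ℕ) = (j:ℕ) then 2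
      else if (i:ℕ) + 1 = (j:ℕ) ∨ (j:ℕ) + 1 = (i:ℕ) then 1 else 0 := by
  have hi : (i:ℕ) < N := lt_of_lt_of_le i.2 (Nat.sub_le N 1)
  have hi1 : (i:ℕ)+1 < N := by have := i.2; omega
  have expand : ∀ k : Fin N, Tmat N k i * Tmat N k j =
      (if (k:ℕ) = (i:ℕ) then (if (i:ℕ) = (j:ℕ) then 1 else 0) + (if (i:ℕ) = (j:ℕ)+1 then 1 else 0) else 0)
      + (if (k:ℕ) = (i:ℕ)+1 then (if (i:ℕ)+1 = (j:ℕ) then 1 else 0) + (if (i:ℕ)+1 = (j:ℕ)+1 then 1 else 0) else 0) := by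
    intro k
    simp only [Tmat, Matrix.of_apply]
    split_ifs <;> first | omega | norm_num
  simp_rw [expand]
  rw [Finset.sum_add_distrib, sum_ind _ hi, sum_ind _ hi1]
  split_ifs <;> first | omega | norm_num

lemma Hident (N : ℕ) :
    constB N - ((N : ℝ) / 12) • lap (N - 1)
      = (1/4 : ℝ) • ((Tmat N)ᵀ * Mmat N * Tmat N) := by
  ext i j
  have h1 : ∀ l : Fin N, ((Tmat N)ᵀ * Mmat N) i l = (N : ℝ) * Tmat N l i - 2 := by
    intro l
    have hl : (l : ℕ) < N := l.2
    rw [Matrix.mul_apply]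
    have : ∀ k : Fin N, (Tmat N)ᵀ i k * Mmat N k l
        = (if (k:ℕ) = (l:ℕ) then Tmat N l i * (N:ℝ) else 0) - Tmat N k i := by
      intro k
      simp only [Mmat, Matrix.transpose_apply, Matrix.of_apply]
      rcases eq_or_ne k l with rfl | hkl
      · simp [mul_sub]
      · have : ((k:ℕ) = (l:ℕ)) = False := by
          simp [Fin.ext_iff] at hkl ⊢; exact hkl
        simp [hkl, this, mul_sub]
    simp_rw [this]
    rw [Finset.sum_sub_distrib, sum_ind (l:ℕ) hl, sumT]
    ring
  have h2 : ((Tmat N)ᵀ * Mmat N * Tmat N) i j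
      = (N : ℝ) * (∑ l : Fin N, Tmat N l i * Tmat N l j) - 4 := by
    rw [Matrix.mul_apply]
    simp_rw [h1, sub_mul, Finset.sum_sub_distrib, ← Finset.mul_sum, mul_assoc]
    rw [← Finset.mul_sum, sumT]
    ring
  have h3 := sumTT i j
  simp only [Matrix.sub_apply, Matrix.smul_apply, Pi.smul_apply, constB, lap,
    Matrix.of_apply, smul_eq_mul, h2, h3]
  split_ifs <;> ring

lemma mvM (y : Fin N → ℝ) (k : Fin N) :
    (Mmat N *ᵥ y) k = (N : ℝ) * y k - ∑ l, y l := by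
  rw [Matrix.mulVec, dotProduct]
  have : ∀ l : Fin N, Mmat N k l * y l = (if k = l then (N:ℝ) * y l else 0) - y l := by
    intro l
    simp only [Mmat, Matrix.of_apply, sub_mul, one_mul]
    split_ifs <;> simp
  simp_rw [this]
  rw [Finset.sum_sub_distrib, Finset.sum_ite_eq]
  simp

lemma quadM (y : Fin N → ℝ) :
    y ⬝ᵥ Mmat N *ᵥ y = (1/2) * ∑ k : Fin N, ∑ l : Fin N, (y k - y l)^2 := by
  rw [dotProduct]
  simp_rw [mvM]
  have cardN : ((Finset.univ : Finset (Fin N)).card : ℝ) = N := by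
    rw [Finset.card_univ, Fintype.card_fin]
  have L : ∑ k : Fin N, y k * ((N:ℝ) * y k - ∑ l, y l)
      = (N:ℝ) * (∑ k, (y k)^2) - (∑ k, y k) * (∑ k, y k) := by
    have : ∀ k : Fin N, y k * ((N:ℝ) * y k - ∑ l, y l)
        = (N:ℝ) * (y k)^2 - (∑ l, y l) * y k := fun k => by ring
    simp_rw [this]
    rw [Finset.sum_sub_distrib, ← Finset.mul_sum, ← Finset.mul_sum]
  have R : ∀ k : Fin N, ∑ l : Fin N, (y k - y l)^2
      = (N : ℝ) * (y k)^2 - 2 * y k * (∑ l, y l) + ∑ l, (y l)^2 := by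
    intro k
    have : ∀ l : Fin N, (y k - y l)^2 = (y k)^2 - 2 * y k * y l + (y l)^2 := fun l => by ring
    simp_rw [this]
    rw [Finset.sum_add_distrib, Finset.sum_sub_distrib, Finset.sum_const, ← Finset.mul_sum,
      nsmul_eq_mul, cardN]
  rw [L]
  simp_rw [R]
  rw [Finset.sum_add_distrib, Finset.sum_sub_distrib, ← Finset.mul_sum, Finset.sum_const,
    nsmul_eq_mul, cardN]
  have : ∑ k : Fin N, 2 * y k * (∑ l, y l) = 2 * (∑ k, y k) * (∑ k, y k) := by
    rw [← Finset.sum_mul]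
    congr 1
    rw [Finset.mul_sum]
  rw [this]
  ring

lemma Mherm : (Mmat N).IsHermitian := by
  ext k l
  simp only [Mmat, Matrix.conjTranspose_apply, Matrix.of_apply, star_trivial]
  rcases eq_or_ne k l with rfl | h
  · simp
  · simp [h, h.symm, Ne.symm h]

lemma Mpsd : (Mmat N).PosSemidef := by
  refine .of_dotProduct_mulVec_nonneg Mherm fun y => ?_
  rw [star_trivial, quadM]
  positivity

lemma quadM_zero {y : Fin N → ℝ} (h : y ⬝ᵥ Mmat N *ᵥ y = 0) :
    ∀ k l : Fin N, y k = y l := by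
  rw [quadM] at h
  have h' : ∑ k : Fin N, ∑ l : Fin N, (y k - y l)^2 = 0 := by linarith
  intro k l
  have hnn : ∀ k ∈ (Finset.univ : Finset (Fin N)),
      (0:ℝ) ≤ ∑ l : Fin N, (y k - y l)^2 := fun k _ => by positivity
  have h1 := (Finset.sum_eq_zero_iff_of_nonneg hnn).mp h' k (Finset.mem_univ k)
  have hnn2 : ∀ l ∈ (Finset.univ : Finset (Fin N)), (0:ℝ) ≤ (y k - y l)^2 :=
    fun l _ => by positivity
  have h2 := (Finset.sum_eq_zero_iff_of_nonneg hnn2).mp h1 l (Finset.mem_univ l)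
  have := sq_eq_zero_iff.mp h2
  linarith

lemma sum_ind_zero {n : ℕ} (m : ℕ) (hm : ¬ m < n) (c : Fin n → ℝ) :
    (∑ k : Fin n, if (k:ℕ) = m then c k else 0) = 0 :=
  Finset.sum_eq_zero fun j _ => by rw [if_neg]; omega

lemma Tapp (x : Fin (N-1) → ℝ) (k : Fin N) :
    (Tmat N *ᵥ x) k =
      (if h : (k:ℕ) < N - 1 then x ⟨(k:ℕ), h⟩ else 0) +
      (if h : 1 ≤ (k:ℕ) ∧ (k:ℕ) - 1 < N - 1 then x ⟨(k:ℕ) - 1, h.2⟩ else 0) := by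
  rw [Matrix.mulVec, dotProduct]
  have split : ∀ j : Fin (N-1), Tmat N k j * x j
      = (if (j:ℕ) = (k:ℕ) then x j else 0) + (if (k:ℕ) = (j:ℕ)+1 then x j else 0) := by
    intro j
    simp only [Tmat, Matrix.of_apply]
    split_ifs <;> first | omega | ring
  simp_rw [split]
  rw [Finset.sum_add_distrib]
  congr 1
  · by_cases h : (k:ℕ) < N - 1
    · rw [sum_ind _ h, dif_pos h]
    · rw [dif_neg h, sum_ind_zero _ h]
  · by_cases h : 1 ≤ (k:ℕ) ∧ (k:ℕ) - 1 < N - 1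
    · rw [dif_pos h]
      have e2 : ∀ j : Fin (N-1), (if (k:ℕ) = (j:ℕ)+1 then x j else 0)
          = (if (j:ℕ) = (k:ℕ)-1 then x j else 0) := by
        intro j; split_ifs <;> first | rfl | omega
      simp_rw [e2]
      exact sum_ind _ h.2 x
    · rw [dif_neg h]
      apply Finset.sum_eq_zero
      intro j _
      rw [if_neg]
      omega

lemma Kpsd : ((Tmat N)ᵀ * Mmat N * Tmat N).PosSemidef := by
  have hTT : (Tmat N)ᴴ = (Tmat N)ᵀ := by
    ext a b; simp [Matrix.conjTranspose_apply]
  exact hTT ▸ Mpsd.conjTranspose_mul_mul_same (Tmat N)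

lemma quadH (N : ℕ) (x : Fin (N-1) → ℝ) :
    x ⬝ᵥ (constB N - ((N : ℝ) / 12) • lap (N - 1)) *ᵥ x
      = (1/4 : ℝ) * ((Tmat N *ᵥ x) ⬝ᵥ (Mmat N *ᵥ (Tmat N *ᵥ x))) := by
  rw [Hident, Matrix.smul_mulVec, dotProduct_smul, ← Matrix.mulVec_mulVec,
    ← Matrix.mulVec_mulVec, Matrix.dotProduct_mulVec x, Matrix.vecMul_transpose]
  simp

lemma Tapp' (x : Fin (N-1) → ℝ) (m : ℕ) (hm : m < N) :
    (Tmat N *ᵥ x) ⟨m, hm⟩ =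
      (if h : m < N - 1 then x ⟨m, h⟩ else 0) +
      (if h : 1 ≤ m ∧ m - 1 < N - 1 then x ⟨m - 1, h.2⟩ else 0) :=
  Tapp x ⟨m, hm⟩

lemma Hpsd (N : ℕ) : (constB N - ((N : ℝ) / 12) • lap (N - 1)).PosSemidef := by
  refine .of_dotProduct_mulVec_nonneg ?_ ?_
  · have h := (Kpsd (N := N)).1
    rw [Hident]
    unfold Matrix.IsHermitian at h ⊢
    rw [Matrix.conjTranspose_smul, h]
    norm_num
  · intro x
    rw [star_trivial, quadH]
    have := (Mpsd (N := N)).dotProduct_mulVec_nonneg (Tmat N *ᵥ x)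
    rw [star_trivial] at this
    linarith

lemma quadH_zero {N : ℕ} (hN : 2 ≤ N) (hodd : Odd N) (x : Fin (N-1) → ℝ)
    (h : x ⬝ᵥ (constB N - ((N : ℝ) / 12) • lap (N - 1)) *ᵥ x = 0) : x = 0 := by
  rw [quadH] at h
  have hy : (Tmat N *ᵥ x) ⬝ᵥ (Mmat N *ᵥ (Tmat N *ᵥ x)) = 0 := by linarith
  have hconst := quadM_zero hy
  have h0N : 0 < N := by omega
  set c : ℝ := (Tmat N *ᵥ x) ⟨0, h0N⟩ with hc
  have hyc : ∀ m : ℕ, ∀ hm : m < N, (Tmat N *ᵥ x) ⟨m, hm⟩ = c :=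
    fun m hm => hconst ⟨m, hm⟩ ⟨0, h0N⟩
  have key : ∀ m : ℕ, ∀ hm : m < N - 1, x ⟨m, hm⟩ = if Even m then c else 0 := by
    intro m
    induction m with
    | zero =>
      intro hm
      have h0 := hyc 0 h0N
      rw [Tapp', dif_pos hm, dif_neg (by omega)] at h0
      simpa using h0
    | succ m ih =>
      intro hm
      have hm' : m < N - 1 := by omega
      have hk : m + 1 < N := by omega
      have hp : 1 ≤ m + 1 ∧ m + 1 - 1 < N - 1 := ⟨by omega, by omega⟩
      have hs := hyc (m+1) hk
      rw [Tapp', dif_pos hm, dif_pos hp] at hs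
      have hmk : (⟨m+1-1, hp.2⟩ : Fin (N-1)) = ⟨m, hm'⟩ := by
        apply Fin.ext; simp
      rw [hmk, ih hm'] at hs
      by_cases he : Even m
      · rw [if_pos he] at hs
        rw [if_neg (by simp [Nat.even_add_one, he])]
        linarith
      · rw [if_neg he] at hs
        rw [if_pos (by simp [Nat.even_add_one, he])]
        linarith
  have hlastk : N - 1 < N := by omega
  have hq : 1 ≤ N - 1 ∧ N - 1 - 1 < N - 1 := ⟨by omega, by omega⟩
  have hlast := hyc (N-1) hlastk
  rw [Tapp', dif_neg (by omega), dif_pos hq] at hlast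
  have hN2 : x ⟨N-1-1, hq.2⟩ = if Even (N-1-1) then c else 0 := key _ _
  have hnotEven : ¬ Even (N-1-1) := by
    rcases hodd with ⟨t, ht⟩
    rw [Nat.even_iff]; omega
  rw [hN2, if_neg hnotEven] at hlast
  have hc0 : c = 0 := by
    simpa using hlast.symm
  funext j
  have hj : x j = x ⟨(j:ℕ), j.2⟩ := by congr
  rw [hj, key (j:ℕ) j.2, hc0]
  simp

lemma Hsing {N : ℕ} (hN : 2 ≤ N) (heven : Even N) :
    (constB N - ((N : ℝ) / 12) • lap (N - 1)).det = 0 := by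
  set v : Fin (N-1) → ℝ := fun j => if Even (j:ℕ) then 1 else 0 with hv
  have hNmod : N % 2 = 0 := Nat.even_iff.mp heven
  have hTv : Tmat N *ᵥ v = fun _ => 1 := by
    funext k
    have hk := k.2
    have : (Tmat N *ᵥ v) ⟨(k:ℕ), hk⟩ = 1 := by
      rw [Tapp']
      by_cases h1 : (k:ℕ) < N - 1 <;>
        by_cases h2 : 1 ≤ (k:ℕ) ∧ (k:ℕ) - 1 < N - 1
      · rw [dif_pos h1, dif_pos h2]
        simp only [hv]
        simp only [Nat.even_iff]
        split_ifs <;> first | omega | norm_num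
      · rw [dif_pos h1, dif_neg h2]
        have hk0 : (k:ℕ) = 0 := by omega
        simp [hv, hk0]
      · rw [dif_neg h1, dif_pos h2]
        have hkN : (k:ℕ) = N - 1 := by omega
        simp only [hv]
        rw [if_pos (by simp only [Nat.even_iff]; omega)]
        norm_num
      · exfalso; omega
    simpa using this
  have hMv : Mmat N *ᵥ (fun _ => (1:ℝ)) = 0 := by
    funext k
    rw [mvM]
    simp [Finset.card_univ]
  have hHv : (constB N - ((N : ℝ) / 12) • lap (N - 1)) *ᵥ v = 0 := by
    rw [Hident, Matrix.smul_mulVec, ← Matrix.mulVec_mulVec, ← Matrix.mulVec_mulVec,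
      hTv, hMv, Matrix.mulVec_zero, smul_zero]
  have hvne : v ≠ 0 := by
    intro h0
    have h01 : (0:ℕ) < N - 1 := by omega
    have := congrFun h0 ⟨0, h01⟩
    simp [hv] at this
  exact (Matrix.exists_mulVec_eq_zero_iff).mp ⟨v, hvne, hHv⟩


/-- **Comparison of the constant-kernel stiffness matrix with the discrete
Laplacian.**  For `N ≥ 2`, `H = B − (N/12)L_{N−1}` is positive semidefinite;
moreover `H` is singular when `N` is even and positive definite when `N` is odd. -/
theorem stmt13 (N : ℕ) (hN : 2 ≤ N) :
    (constB N - ((N : ℝ) / 12) • lap (N - 1)).PosSemidef ∧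
    (Even N → (constB N - ((N : ℝ) / 12) • lap (N - 1)).det = 0) ∧
    (Odd N → (constB N - ((N : ℝ) / 12) • lap (N - 1)).PosDef) := by
  refine ⟨Hpsd N, fun he => Hsing hN he, fun ho => .of_dotProduct_mulVec_pos (Hpsd N).1 fun x hx => ?_⟩
  rw [star_trivial]
  rcases lt_or_eq_of_le ((Hpsd N).dotProduct_mulVec_nonneg x) with h | h
  · rw [star_trivial] at h; exact h
  · rw [star_trivial] at h
    exact absurd (quadH_zero hN ho x h.symm) hx
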